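/- Let L be a finite bounded De Morgan algebra in which x ∧ y = ⊥ implies x = ⊥ or y = ⊥, and let m_1, m_2 be mass functions on L with m_1(⊥) = m_2(⊥) = 0 and total mass 1 each. Then Σ { m_1(x_1)·m_2(x_2) : x_1 ∧ x_2 ≠ ⊥ } = 1, and consequently the normalized Dempster combination m_{1⊕2}(x) (defined as 0 for x = ⊥ and as the normalized sum otherwise) equals Σ { m_1(x_1)·m_2(x_2) : x_1 ∧ x_2 = x } for every x. -/
import Mathlib


open Finset

/-- Let `L` be a finite bounded De Morgan algebra in which `x ⊓ y = ⊥` implies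
`x = ⊥` or `y = ⊥`, and let `m₁, m₂` be mass functions on `L` (total mass `1`,
vanishing at `⊥`).  Then the mass of the non-conflicting pairs is `1`, and the
normalized Dempster combination coincides with the unnormalized one. -/
theorem dempster_normalized_eq_unnormalized {L : Type*} [DistribLattice L]
    [BoundedOrder L] [Fintype L] [DecidableEq L]
    (neg : L → L) (hinv : ∀ x, neg (neg x) = x)
    (hdm : ∀ x y, neg (x ⊓ y) = neg x ⊔ neg y)
    (hbot : ∀ x y : L, x ⊓ y = ⊥ → x = ⊥ ∨ y = ⊥)
    (m₁ m₂ : L → ℝ)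
    (h₁ : ∀ x, m₁ x ∈ Set.Icc (0 : ℝ) 1) (h₂ : ∀ x, m₂ x ∈ Set.Icc (0 : ℝ) 1)
    (hb₁ : m₁ ⊥ = 0) (hb₂ : m₂ ⊥ = 0)
    (hs₁ : ∑ x, m₁ x = 1) (hs₂ : ∑ x, m₂ x = 1) :
    (∑ p ∈ (univ ×ˢ univ).filter (fun p : L × L => p.1 ⊓ p.2 ≠ ⊥),
        m₁ p.1 * m₂ p.2) = 1 ∧
      ∀ x : L,
        (if x = ⊥ then (0 : ℝ)
          else (∑ p ∈ (univ ×ˢ univ).filter (fun p : L × L => p.1 ⊓ p.2 = x),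
                  m₁ p.1 * m₂ p.2) /
               (∑ p ∈ (univ ×ˢ univ).filter (fun p : L × L => p.1 ⊓ p.2 ≠ ⊥),
                  m₁ p.1 * m₂ p.2))
          = ∑ p ∈ (univ ×ˢ univ).filter (fun p : L × L => p.1 ⊓ p.2 = x),
              m₁ p.1 * m₂ p.2 := by
  have key : (∑ p ∈ (univ ×ˢ univ).filter (fun p : L × L => p.1 ⊓ p.2 ≠ ⊥),
      m₁ p.1 * m₂ p.2) = 1 := by
    have hall : (∑ p ∈ (univ ×ˢ univ : Finset (L × L)), m₁ p.1 * m₂ p.2) = 1 := by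
      rw [Finset.sum_product]
      calc (∑ x : L, ∑ y : L, m₁ x * m₂ y) = ∑ x : L, m₁ x * ∑ y : L, m₂ y := by
            simp [Finset.mul_sum]
        _ = 1 := by rw [hs₂]; simpa using hs₁
    rw [← Finset.sum_filter_add_sum_filter_not (univ ×ˢ univ)
      (fun p : L × L => p.1 ⊓ p.2 ≠ ⊥)] at hall
    have hz : (∑ p ∈ (univ ×ˢ univ).filter (fun p : L × L => ¬ p.1 ⊓ p.2 ≠ ⊥),
        m₁ p.1 * m₂ p.2) = 0 := by
      apply Finset.sum_eq_zero
      intro p hp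
      simp only [Finset.mem_filter, not_not] at hp
      rcases hbot _ _ hp.2 with h | h
      · rw [h, hb₁, zero_mul]
      · rw [h, hb₂, mul_zero]
    linarith
  refine ⟨key, fun x => ?_⟩
  by_cases hx : x = ⊥
  · subst hx
    simp only [if_true]
    symm
    apply Finset.sum_eq_zero
    intro p hp
    simp only [Finset.mem_filter] at hp
    rcases hbot _ _ hp.2 with h | h
    · rw [h, hb₁, zero_mul]
    · rw [h, hb₂, mul_zero]
  · rw [if_neg hx, key, div_one]
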